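/- Let P_{X^m} be the distribution of m draws without replacement from an urn of n balls of q colors with color proportions P = (p_1,…,p_q) (i.e., the first m coordinates of a uniform sample from T_n(P)), and P_X^m the i.i.d. distribution. For m < n, D(P_{X^m} ‖ P_X^m) ≤ ((q−1)/(n−1)) ∑_{t=1}^{m−1} t/(n−t), and hence D(P_{X^m} ‖ P_X^m) ≤ (q−1) log((n−1)/(n−m)) + O(q). -/

import Mathlib

/-!
Write `D` as the average, over the type class `T` of the urn, of the log-likelihood ratio of the
first `m` draws, and telescope it along the draws. Given its first `t` draws, a uniform element
of `T` is uniform among the completions of that prefix, which are exchangeable in the remaining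
`n - t` positions; so the next draw has colour `i` with probability `(cᵢ - k) / (n - t)`, where
`k` counts the earlier draws of colour `i`. By `log x ≤ x - 1`, the mean `t`-th term is at most
`n / (n - t) * (1 - 𝔼[k / c]) - 1`, with `c` the count of the colour drawn, and exchangeability
of pairs of positions gives `𝔼[k / c] ≥ t (n - q) / (n (n - 1))`, which leaves
`(q - 1) t / ((n - 1) (n - t))`.
The logarithmic bound then follows from `t / (n - t) ≤ (n - 1) / (n - t)` and
`∑_{t < m} 1 / (n - t) ≤ log (n / (n - m))`.
-/

open Finset Real

lemma prod_range_div_eq_div_of_ne_zero {G : Type*} [CommGroupWithZero G] {f : ℕ → G}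
    (hf : ∀ i, f i ≠ 0) (n : ℕ) : ∏ i ∈ range n, f (i + 1) / f i = f n / f 0 := by
  induction n with
  | zero => simp [hf 0]
  | succ n ih => rw [prod_range_succ, ih, mul_comm, div_mul_div_cancel₀ (hf n)]

lemma sum_card_filter_mul_eq_sum_comp {β γ : Type*} [Fintype γ] [DecidableEq γ] (s : Finset β)
    (r : β → γ) (g : γ → ℝ) :
    ∑ x, (#{z ∈ s | r z = x} : ℝ) * g x = ∑ z ∈ s, g (r z) := by
  rw [← sum_fiberwise s r]
  refine sum_congr rfl fun x _ => ?_
  rw [sum_congr rfl fun z hz => by rw [(mem_filter.mp hz).2], sum_const, nsmul_eq_mul]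

lemma Fin.card_filter_le_val {n : ℕ} (t : ℕ) : #{b : Fin n | t ≤ b} = n - t := by
  have h := card_filter_add_card_filter_not (s := (univ : Finset (Fin n))) fun b => (b : ℕ) < t
  simp only [not_lt, Fin.card_filter_val_lt, card_univ, Fintype.card_fin] at h
  omega

section Exchangeable

variable {ι α : Type*} [DecidableEq ι] [DecidableEq α] {S : Finset (ι → α)}

lemma card_filter_apply_eq_of_comp_swap_mem {a b : ι}
    (hS : ∀ z ∈ S, z ∘ Equiv.swap a b ∈ S) (i : α) :
    #{z ∈ S | z a = i} = #{z ∈ S | z b = i} := by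
  refine card_nbij' (· ∘ Equiv.swap a b) (· ∘ Equiv.swap a b) ?_ ?_ ?_ ?_ <;> intro z hz
  all_goals simp_all [Function.comp_def]

def SwapClosedOn (S : Finset (ι → α)) (U : Finset ι) : Prop :=
  ∀ a ∈ U, ∀ b ∈ U, ∀ z ∈ S, z ∘ Equiv.swap a b ∈ S

variable {U V : Finset ι}

lemma SwapClosedOn.sum_card_filter_apply_eq (hS : SwapClosedOn S U) (hV : V ⊆ U) {a : ι}
    (ha : a ∈ U) (i : α) : ∑ z ∈ S, #{b ∈ V | z b = i} = #V * #{z ∈ S | z a = i} := by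
  calc ∑ z ∈ S, #{b ∈ V | z b = i} = ∑ b ∈ V, #{z ∈ S | z b = i} := by
        simp only [card_filter]; exact sum_comm
    _ = ∑ _b ∈ V, #{z ∈ S | z a = i} := sum_congr rfl fun b hb =>
        (card_filter_apply_eq_of_comp_swap_mem (hS a ha b (hV hb)) i).symm
    _ = _ := by rw [sum_const, smul_eq_mul]

lemma SwapClosedOn.card_mul_card_filter_apply_eq (hS : SwapClosedOn S U) {a : ι} (ha : a ∈ U)
    {i : α} {c : ℕ} (hc : ∀ z ∈ S, #{b ∈ U | z b = i} = c) :
    #U * #{z ∈ S | z a = i} = c * #S := by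
  rw [← hS.sum_card_filter_apply_eq subset_rfl ha, sum_congr rfl hc, sum_const, smul_eq_mul,
    mul_comm]

lemma SwapClosedOn.card_mul_sum_card_filter_apply_eq (hS : SwapClosedOn S U) (hV : V ⊆ U)
    {i : α} {c : ℕ} (hc : ∀ z ∈ S, #{b ∈ U | z b = i} = c) :
    #U * ∑ z ∈ S, #{b ∈ V | z b = i} = #V * (c * #S) := by
  rcases U.eq_empty_or_nonempty with rfl | ⟨a, ha⟩
  · simp [subset_empty.mp hV]
  · rw [hS.sum_card_filter_apply_eq hV ha, mul_left_comm, hS.card_mul_card_filter_apply_eq ha hc]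

end Exchangeable

section TypeClass

variable {ι α : Type*} [Fintype ι] [DecidableEq ι] [Fintype α] [DecidableEq α]

def typeClass (cnt : α → ℕ) : Finset (ι → α) :=
  univ.filter fun z => ∀ i, (univ.filter fun t => z t = i).card = cnt i

variable {cnt : α → ℕ} {z : ι → α}

lemma card_filter_apply_eq_of_mem_typeClass (hz : z ∈ typeClass cnt) (i : α) :
    #{t | z t = i} = cnt i := by
  simp only [typeClass, mem_filter, mem_univ, true_and] at hz
  exact hz i

lemma cnt_apply_pos_of_mem_typeClass (hz : z ∈ typeClass cnt) (t : ι) : 0 < cnt (z t) := by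
  rw [← card_filter_apply_eq_of_mem_typeClass hz]
  exact card_pos.mpr ⟨t, by simp⟩

lemma comp_perm_mem_typeClass (hz : z ∈ typeClass cnt) (σ : Equiv.Perm ι) :
    z ∘ σ ∈ typeClass cnt := by
  simp only [typeClass, mem_filter, mem_univ, true_and]
  intro i
  rw [← card_filter_apply_eq_of_mem_typeClass hz i]
  exact card_nbij' σ σ.symm (by intro; simp) (by intro; simp) (by intro; simp) (by intro; simp)

end TypeClass

section Urn

variable {α : Type*} [Fintype α] [DecidableEq α] {n : ℕ}

def prefixClass (cnt : α → ℕ) (w : Fin n → α) (t : ℕ) : Finset (Fin n → α) :=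
  {z ∈ typeClass cnt | ∀ s : Fin n, (s : ℕ) < t → z s = w s}

def repeatCount (w : Fin n → α) (τ : Fin n) : ℕ := #{s | s < τ ∧ w s = w τ}

/-- Log of the ratio between the probability of the `τ`-th draw of `z` given the earlier ones,
under the uniform law on `typeClass cnt`, and its unconditional probability. -/
noncomputable def condLogRatio (cnt : α → ℕ) (z : Fin n → α) (τ : Fin n) : ℝ :=
  log ((#(prefixClass cnt z (τ + 1)) / #(prefixClass cnt z τ) : ℝ) / (cnt (z τ) / n))

variable {cnt : α → ℕ}

lemma prefixClass_zero (w : Fin n → α) : prefixClass cnt w 0 = typeClass cnt :=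
  filter_true_of_mem fun _ _ _ hs => absurd hs (Nat.not_lt_zero _)

lemma mem_prefixClass_self {w : Fin n → α} (hw : w ∈ typeClass cnt) (t : ℕ) :
    w ∈ prefixClass cnt w t :=
  mem_filter.mpr ⟨hw, fun _ _ => rfl⟩

lemma filter_prefixClass_apply_eq (w : Fin n → α) (τ : Fin n) :
    {z ∈ prefixClass cnt w τ | z τ = w τ} = prefixClass cnt w (τ + 1) := by
  ext z
  simp only [prefixClass, mem_filter, and_assoc]
  refine and_congr_right fun _ =>
    ⟨fun ⟨h, hτ⟩ s hs => ?_, fun h => ⟨fun s hs => h s (by omega), h τ (by omega)⟩⟩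
  rcases Nat.lt_succ_iff_lt_or_eq.mp hs with hs | hs
  · exact h s hs
  · rwa [Fin.ext hs]

lemma comp_swap_mem_prefixClass {w z : Fin n → α} {t : ℕ} (hz : z ∈ prefixClass cnt w t)
    {a b : Fin n} (ha : t ≤ a) (hb : t ≤ b) : z ∘ Equiv.swap a b ∈ prefixClass cnt w t := by
  simp only [prefixClass, mem_filter] at hz ⊢
  refine ⟨comp_perm_mem_typeClass hz.1 _, fun s hs => ?_⟩
  rw [Function.comp_apply, Equiv.swap_apply_of_ne_of_ne (by omega) (by omega)]
  exact hz.2 s hs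

lemma card_filter_le_apply_add_card_filter_lt_apply {w z : Fin n → α} {t : ℕ}
    (hz : z ∈ prefixClass cnt w t) (i : α) :
    #{b : Fin n | t ≤ b ∧ z b = i} + #{b : Fin n | b < t ∧ w b = i} = cnt i := by
  simp only [prefixClass, mem_filter] at hz
  have hsplit := card_filter_add_card_filter_not (s := ({b | z b = i} : Finset (Fin n)))
    fun b => t ≤ (b : ℕ)
  rw [card_filter_apply_eq_of_mem_typeClass hz.1, filter_filter, filter_filter] at hsplit
  have hprefix : #{b : Fin n | z b = i ∧ ¬t ≤ b} = #{b : Fin n | b < t ∧ w b = i} :=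
    congrArg card <| filter_congr fun b _ => by
      rw [not_le, and_comm]
      exact and_congr_right fun hb => by rw [hz.2 b hb]
  have hsuffix : #{b : Fin n | z b = i ∧ t ≤ b} = #{b : Fin n | t ≤ b ∧ z b = i} :=
    congrArg card <| filter_congr fun _ _ => and_comm
  omega

lemma sub_mul_card_prefixClass_succ (w : Fin n → α) (τ : Fin n) :
    (n - τ) * #(prefixClass cnt w (τ + 1))
      = (cnt (w τ) - repeatCount w τ) * #(prefixClass cnt w τ) := by
  rw [← Fin.card_filter_le_val, ← filter_prefixClass_apply_eq]
  have hS : SwapClosedOn (prefixClass cnt w τ) {b : Fin n | (τ : ℕ) ≤ b} :=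
    fun a ha b hb z hz => comp_swap_mem_prefixClass hz (by simpa using ha) (by simpa using hb)
  refine hS.card_mul_card_filter_apply_eq (by simp) fun z hz => ?_
  have h := card_filter_le_apply_add_card_filter_lt_apply hz (w τ)
  simp only [filter_filter, repeatCount, Fin.lt_def]
  omega

lemma card_prefixClass_succ_div {w : Fin n → α} (hw : w ∈ typeClass cnt) (τ : Fin n) :
    (#(prefixClass cnt w (τ + 1)) : ℝ) / #(prefixClass cnt w τ)
      = (cnt (w τ) - repeatCount w τ) / (n - τ) := by
  have hrep : repeatCount w τ ≤ cnt (w τ) := by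
    rw [repeatCount, ← card_filter_apply_eq_of_mem_typeClass hw]
    exact card_le_card (monotone_filter_right _ fun _ _ h => h.2)
  have hpos : (0 : ℝ) < #(prefixClass cnt w τ) :=
    Nat.cast_pos.mpr (card_pos.mpr ⟨w, mem_prefixClass_self hw τ⟩)
  have hτ : (τ : ℝ) < n := Nat.cast_lt.mpr τ.isLt
  have h := congrArg (Nat.cast (R := ℝ)) (sub_mul_card_prefixClass_succ (cnt := cnt) w τ)
  push_cast [Nat.cast_sub hrep, Nat.cast_sub τ.isLt.le] at h
  rw [div_eq_div_iff hpos.ne' (by linarith)]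
  linarith

lemma card_mul_card_filter_typeClass_apply (τ : Fin n) (i : α) :
    n * #{z ∈ typeClass cnt | z τ = i} = cnt i * #(typeClass (ι := Fin n) cnt) := by
  have hS : SwapClosedOn (typeClass (ι := Fin n) cnt) univ :=
    fun a _ b _ z hz => comp_perm_mem_typeClass hz (Equiv.swap a b)
  simpa using hS.card_mul_card_filter_apply_eq (mem_univ τ)
    fun z hz => by simpa using card_filter_apply_eq_of_mem_typeClass hz i

lemma sub_one_mul_sum_card_filter_lt_apply (τ : Fin n) (i : α) :
    (n - 1) * ∑ z ∈ typeClass cnt with z τ = i, #{s | s < τ ∧ z s = i}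
      = τ * ((cnt i - 1) * #{z ∈ typeClass cnt | z τ = i}) := by
  have hV : #({s | s < τ} : Finset (Fin n)) = τ := by rw [filter_gt_eq_Iio, Fin.card_Iio]
  have hS : SwapClosedOn {z ∈ typeClass cnt | z τ = i} (univ.erase τ) := by
    intro a ha b hb z hz
    simp only [mem_filter, mem_erase] at ha hb hz ⊢
    refine ⟨comp_perm_mem_typeClass hz.1 _, ?_⟩
    rw [Function.comp_apply, Equiv.swap_apply_of_ne_of_ne ha.1.symm hb.1.symm, hz.2]
  have h := hS.card_mul_sum_card_filter_apply_eq (V := {s | s < τ}) (i := i) (c := cnt i - 1)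
    (fun s hs => by simpa using (mem_filter.mp hs).2.ne) fun z hz => by
      simp only [mem_filter] at hz
      rw [filter_erase, card_erase_of_mem (by simp [hz.2]),
        card_filter_apply_eq_of_mem_typeClass hz.1]
  simpa only [filter_filter, hV, card_erase_of_mem (mem_univ τ), card_univ,
    Fintype.card_fin] using h

lemma mul_card_le_sum_card_filter_lt_apply_div (τ : Fin n) (i : α) :
    (τ : ℝ) * (cnt i - 1) * #(typeClass (ι := Fin n) cnt)
      ≤ n * (n - 1) *
        ∑ z ∈ typeClass cnt with z τ = i, (#{s | s < τ ∧ z s = i} : ℝ) / cnt i := by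
  rw [← sum_div]
  rcases Nat.eq_zero_or_pos (cnt i) with hi | hi
  -- a colour absent from the urn: the right side is a division by zero, hence `0`
  · rw [hi, Nat.cast_zero, div_zero, mul_zero, zero_sub, mul_neg_one, neg_mul, neg_nonpos]
    positivity
  have hpair := congrArg (Nat.cast (R := ℝ))
    (sub_one_mul_sum_card_filter_lt_apply (cnt := cnt) τ i)
  have hmarg := congrArg (Nat.cast (R := ℝ))
    (card_mul_card_filter_typeClass_apply (cnt := cnt) τ i)
  push_cast [Nat.cast_sub (Nat.one_le_of_lt τ.isLt), Nat.cast_sub hi] at hpair hmarg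
  rw [← mul_div_assoc, le_div_iff₀ (Nat.cast_pos.mpr hi)]
  exact le_of_eq <| by linear_combination -(τ : ℝ) * (cnt i - 1) * hmarg - n * hpair

lemma mul_card_le_sum_repeatCount_div (hsum : ∑ i, cnt i = n) (τ : Fin n) :
    (τ : ℝ) * (n - Fintype.card α) * #(typeClass (ι := Fin n) cnt)
      ≤ n * (n - 1) * ∑ z ∈ typeClass cnt, (repeatCount z τ : ℝ) / cnt (z τ) := by
  have hcolors : (n : ℝ) - Fintype.card α = ∑ i, ((cnt i : ℝ) - 1) := by
    rw [sum_sub_distrib, ← Nat.cast_sum, hsum, sum_const, card_univ, nsmul_one]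
  rw [← sum_fiberwise _ (fun z => z τ), hcolors, mul_sum, sum_mul, mul_sum]
  refine sum_le_sum fun i _ => (mul_card_le_sum_card_filter_lt_apply_div τ i).trans_eq ?_
  congr 1
  refine sum_congr rfl fun z hz => ?_
  rw [(mem_filter.mp hz).2, repeatCount, (mem_filter.mp hz).2]

lemma condLogRatio_le {z : Fin n → α} (hz : z ∈ typeClass cnt) (τ : Fin n) :
    condLogRatio cnt z τ
      ≤ n / (n - τ) - n / (n - τ) * (repeatCount z τ / cnt (z τ)) - 1 := by
  have hc : (0 : ℝ) < cnt (z τ) := Nat.cast_pos.mpr (cnt_apply_pos_of_mem_typeClass hz τ)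
  have hn : (0 : ℝ) < n - τ := sub_pos.mpr (Nat.cast_lt.mpr τ.isLt)
  have hcard (t : ℕ) : (0 : ℝ) < #(prefixClass cnt z t) :=
    Nat.cast_pos.mpr (card_pos.mpr ⟨z, mem_prefixClass_self hz t⟩)
  refine (log_le_sub_one_of_pos (div_pos (div_pos (hcard _) (hcard _))
    (div_pos hc (by linarith)))).trans_eq ?_
  rw [card_prefixClass_succ_div hz]
  field_simp

lemma sum_condLogRatio_le (hsum : ∑ i, cnt i = n) (τ : Fin n) :
    ∑ z ∈ typeClass cnt, condLogRatio cnt z τ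
      ≤ #(typeClass (ι := Fin n) cnt) * ((Fintype.card α - 1) / (n - 1) * (τ / (n - τ))) := by
  set T := typeClass (ι := Fin n) cnt
  set K := ∑ z ∈ T, (repeatCount z τ : ℝ) / cnt (z τ)
  have hK := mul_card_le_sum_repeatCount_div hsum τ
  have hK0 : 0 ≤ K := sum_nonneg fun _ _ => by positivity
  have hτ : (τ : ℝ) < n := Nat.cast_lt.mpr τ.isLt
  refine (sum_le_sum fun z hz => condLogRatio_le hz τ).trans ?_
  rw [sum_sub_distrib, sum_sub_distrib, ← mul_sum, sum_const, sum_const, nsmul_eq_mul,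
    nsmul_eq_mul, mul_one]
  rcases Nat.lt_or_ge 1 n with hn | hn
  · have hn' : (1 : ℝ) < n := Nat.one_lt_cast.mpr hn
    have key : #T * ((Fintype.card α - 1) / (n - 1) * (τ / (n - τ)))
          - (#T * (n / (n - τ)) - n / (n - τ) * K - #T)
        = (n * (n - 1) * K - τ * (n - Fintype.card α) * #T) / ((n - 1) * (n - τ)) := by
      have : (n : ℝ) - τ ≠ 0 := by linarith
      have : (n : ℝ) - 1 ≠ 0 := by linarith
      field_simp
      ring
    rw [← sub_nonneg, key]
    exact div_nonneg (by linarith) (mul_nonneg (by linarith) (by linarith))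
  · obtain rfl : n = 1 := by have := τ.pos; omega
    have hτ0 : (τ : ℕ) = 0 := by omega
    simp only [hτ0, Nat.cast_zero, Nat.cast_one, sub_zero, div_one, mul_zero]
    linarith

end Urn

section ChainRule

variable {α : Type*} [Fintype α] [DecidableEq α] {n m : ℕ}

noncomputable def prefixLaw (cnt : α → ℕ) (hmn : m ≤ n) (x : Fin m → α) : ℝ :=
  #{z ∈ typeClass (ι := Fin n) cnt | ∀ t, z (Fin.castLE hmn t) = x t}
    / #(typeClass (ι := Fin n) cnt)

variable {cnt : α → ℕ}

lemma log_prefixLaw_div_eq_sum_condLogRatio (hmn : m ≤ n) {z : Fin n → α}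
    (hz : z ∈ typeClass cnt) :
    log (prefixLaw cnt hmn (fun t => z (Fin.castLE hmn t))
        / ∏ t, (cnt (z (Fin.castLE hmn t)) : ℝ) / n)
      = ∑ t : Fin m, condLogRatio cnt z (Fin.castLE hmn t) := by
  have hfiber : ({y ∈ typeClass cnt | ∀ t, y (Fin.castLE hmn t) = z (Fin.castLE hmn t)} :
      Finset (Fin n → α)) = prefixClass cnt z m :=
    filter_congr fun y _ => ⟨fun h s hs => h ⟨s, hs⟩, fun h t => h _ t.isLt⟩
  have hcard (t : ℕ) : (#(prefixClass cnt z t) : ℝ) ≠ 0 :=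
    Nat.cast_ne_zero.mpr (card_pos.mpr ⟨z, mem_prefixClass_self hz t⟩).ne'
  have htel := prod_range_div_eq_div_of_ne_zero hcard m
  rw [← Fin.prod_univ_eq_prod_range] at htel
  rw [prefixLaw, hfiber, ← prefixClass_zero z, ← htel, ← prod_div_distrib, log_prod]
  · rfl
  · intro t _
    have hn : (n : ℝ) ≠ 0 := Nat.cast_ne_zero.mpr (by have := t.isLt; omega)
    exact div_ne_zero (div_ne_zero (hcard _) (hcard _)) (div_ne_zero
      (Nat.cast_ne_zero.mpr (cnt_apply_pos_of_mem_typeClass hz _).ne') hn)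

lemma sum_prefixLaw_mul_log_eq (hmn : m ≤ n) :
    ∑ x, prefixLaw cnt hmn x * log (prefixLaw cnt hmn x / ∏ t, (cnt (x t) : ℝ) / n)
      = (∑ z ∈ typeClass (ι := Fin n) cnt, ∑ t : Fin m,
          condLogRatio cnt z (Fin.castLE hmn t)) / #(typeClass (ι := Fin n) cnt) := by
  have hfilter (x : Fin m → α) :
      ({z ∈ typeClass cnt | ∀ t, z (Fin.castLE hmn t) = x t} : Finset (Fin n → α))
        = {z ∈ typeClass (ι := Fin n) cnt | (fun t => z (Fin.castLE hmn t)) = x} :=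
    filter_congr fun _ _ => funext_iff.symm
  simp only [prefixLaw, hfilter, div_mul_eq_mul_div, ← sum_div]
  rw [sum_card_filter_mul_eq_sum_comp]
  refine congrArg (· / _) (sum_congr rfl fun z hz => ?_)
  rw [← log_prefixLaw_div_eq_sum_condLogRatio hmn hz, prefixLaw, hfilter]

lemma sum_prefixLaw_mul_log_le [Nonempty α] (hsum : ∑ i, cnt i = n) (hmn : m < n) :
    ∑ x, prefixLaw cnt hmn.le x * log (prefixLaw cnt hmn.le x / ∏ t, (cnt (x t) : ℝ) / n)
      ≤ (Fintype.card α - 1) / (n - 1) * ∑ t ∈ range m, (t : ℝ) / (n - t) := by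
  set T := typeClass (ι := Fin n) cnt
  rw [sum_prefixLaw_mul_log_eq, sum_comm]
  rcases Nat.eq_zero_or_pos #T with hT | hT
  · rw [hT, Nat.cast_zero, div_zero]
    refine mul_nonneg (div_nonneg ?_ ?_) (sum_nonneg fun t ht => div_nonneg t.cast_nonneg ?_)
    · exact sub_nonneg.mpr (Nat.one_le_cast.mpr Fintype.card_pos)
    · exact sub_nonneg.mpr (Nat.one_le_cast.mpr (by omega))
    · exact sub_nonneg.mpr (Nat.cast_le.mpr ((mem_range.mp ht).trans hmn).le)
  rw [div_le_iff₀ (Nat.cast_pos.mpr hT)]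
  calc ∑ t : Fin m, ∑ z ∈ T, condLogRatio cnt z (Fin.castLE hmn.le t)
      ≤ ∑ t : Fin m,
          (#T : ℝ) * ((Fintype.card α - 1) / (n - 1) * ((t : ℕ) / (n - (t : ℕ)))) :=
        sum_le_sum fun t _ => by simpa using sum_condLogRatio_le hsum (Fin.castLE hmn.le t)
    _ = (Fintype.card α - 1) / (n - 1) * (∑ t ∈ range m, (t : ℝ) / (n - t)) * #T := by
        rw [Fin.sum_univ_eq_sum_range
          (fun t => #T * ((Fintype.card α - 1) / (n - 1) * ((t : ℝ) / (n - t)))), ← mul_sum,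
          ← mul_sum]
        ring

end ChainRule

section Harmonic

variable {n m : ℕ}

lemma sum_range_one_div_sub_le_log (hmn : m < n) :
    ∑ t ∈ range m, 1 / ((n : ℝ) - t) ≤ log (n / (n - m)) := by
  have hstep (t : ℕ) (ht : t < m) :
      1 / ((n : ℝ) - t) ≤ log (n - t) - log (n - (t + 1 : ℕ)) := by
    have h1 : (0 : ℝ) < n - (t + 1 : ℕ) := sub_pos.mpr (Nat.cast_lt.mpr (by omega))
    have h2 : (0 : ℝ) < n - t := by push_cast at h1 ⊢; linarith
    have h := log_le_sub_one_of_pos (div_pos h1 h2)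
    rw [log_div h1.ne' h2.ne'] at h
    have : ((n : ℝ) - (t + 1 : ℕ)) / (n - t) - 1 = -(1 / (n - t)) := by
      field_simp; push_cast; ring
    linarith
  have hnm : (0 : ℝ) < n - m := sub_pos.mpr (Nat.cast_lt.mpr hmn)
  calc ∑ t ∈ range m, 1 / ((n : ℝ) - t)
      ≤ ∑ t ∈ range m, (log (n - t) - log (n - (t + 1 : ℕ))) :=
        sum_le_sum fun t ht => hstep t (mem_range.mp ht)
    _ = log (n / (n - m)) := by
        rw [sum_range_sub' (fun t : ℕ => log (n - t)), log_div (by linarith) hnm.ne']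
        simp

lemma mul_sum_div_sub_le_log_add {q : ℝ} (hq : 1 ≤ q) (hmn : m < n) :
    (q - 1) / (n - 1) * ∑ t ∈ range m, (t : ℝ) / (n - t)
      ≤ (q - 1) * log ((n - 1) / (n - m)) + q := by
  rcases le_or_gt n 1 with hn | hn
  · obtain rfl : n = 1 := by omega
    obtain rfl : m = 0 := by omega
    simp only [Nat.cast_one, sub_self, div_zero, range_zero, sum_empty, mul_zero,
      CharP.cast_eq_zero, sub_zero, div_one, log_zero, zero_add]
    linarith
  have hn' : (1 : ℝ) < n := Nat.one_lt_cast.mpr hn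
  have hnm : (0 : ℝ) < n - m := sub_pos.mpr (Nat.cast_lt.mpr hmn)
  have hterm (t : ℕ) (ht : t ∈ range m) :
      (q - 1) / (n - 1) * ((t : ℝ) / (n - t)) ≤ (q - 1) * (1 / (n - t)) := by
    have hnt : (0 : ℝ) < n - t := sub_pos.mpr (Nat.cast_lt.mpr ((mem_range.mp ht).trans hmn))
    have ht1 : (t : ℝ) ≤ n - 1 := by
      have : ((t + 1 : ℕ) : ℝ) ≤ n := Nat.cast_le.mpr ((mem_range.mp ht).trans hmn)
      push_cast at this; linarith
    calc (q - 1) / (n - 1) * ((t : ℝ) / (n - t)) = (q - 1) * (t / (n - 1)) * (1 / (n - t)) := by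
          ring
      _ ≤ (q - 1) * 1 * (1 / (n - t)) := by
          gcongr
          exact div_le_one_of_le₀ ht1 (by linarith)
      _ = (q - 1) * (1 / (n - t)) := by ring
  have hlog : log (n / (n - 1)) ≤ 1 := by
    refine (log_le_sub_one_of_pos (div_pos (by linarith) (by linarith))).trans ?_
    rw [div_sub_one (by linarith), div_le_one (by linarith)]
    linarith [show (2 : ℝ) ≤ n by exact_mod_cast hn]
  calc (q - 1) / (n - 1) * ∑ t ∈ range m, (t : ℝ) / (n - t)
      ≤ (q - 1) * ∑ t ∈ range m, 1 / ((n : ℝ) - t) := by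
        rw [mul_sum, mul_sum]; exact sum_le_sum hterm
    _ ≤ (q - 1) * log (n / (n - m)) :=
        mul_le_mul_of_nonneg_left (sum_range_one_div_sub_le_log hmn) (by linarith)
    _ = (q - 1) * (log (n / (n - 1)) + log ((n - 1) / (n - m))) := by
        rw [← log_mul (by positivity) (by positivity), div_mul_div_cancel₀ (by linarith)]
    _ ≤ (q - 1) * log ((n - 1) / (n - m)) + q := by nlinarith

end Harmonic

/-- Stam's bound on sampling without vs. with replacement: for m < n draws from an urn of
n balls of q colors (with color counts cnt), the KL divergence between the without-replacement
law of m draws and the i.i.d. law satisfies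
D ≤ ((q-1)/(n-1)) ∑_{t=1}^{m-1} t/(n-t), and hence
D ≤ (q-1)·log((n-1)/(n-m)) + O(q), with an O(q) term C·q for a universal constant C. -/
theorem stam_sampling_bound :
    ∃ C : ℝ, ∀ (q n m : ℕ), 0 < q → ∀ (hmn : m < n),
      ∀ cnt : Fin q → ℕ, ∑ i, cnt i = n →
      let p : Fin q → ℝ := fun i => (cnt i : ℝ) / n
      let T : Finset (Fin n → Fin q) := Finset.univ.filter
        fun z => ∀ i, (Finset.univ.filter fun t => z t = i).card = cnt i
      -- law of the first m coordinates of a uniform draw from the type class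
      let Pm : (Fin m → Fin q) → ℝ := fun x =>
        ((T.filter fun z => ∀ t : Fin m, z (Fin.castLE hmn.le t) = x t).card : ℝ) / T.card
      let D : ℝ := ∑ x : Fin m → Fin q, Pm x * Real.log (Pm x / ∏ t, p (x t))
      D ≤ ((q : ℝ) - 1) / ((n : ℝ) - 1) * ∑ t ∈ Finset.range m, (t : ℝ) / ((n : ℝ) - t)
      ∧ D ≤ ((q : ℝ) - 1) * Real.log (((n : ℝ) - 1) / ((n : ℝ) - m)) + C * q := by
  refine ⟨1, fun q n m hq hmn cnt hsum => ?_⟩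
  have : Nonempty (Fin q) := ⟨⟨0, hq⟩⟩
  have hchain := sum_prefixLaw_mul_log_le hsum hmn
  rw [Fintype.card_fin] at hchain
  have hlog := mul_sum_div_sub_le_log_add (q := q) (Nat.one_le_cast.mpr hq) hmn
  intro p T Pm D
  -- `T` decides `∀ i : Fin q` with `Nat.decidableForallFin`, so it is `typeClass cnt` only up to
  -- the `Decidable` instance, which `congr!` identifies.
  have hD : D = ∑ x, prefixLaw cnt hmn.le x * log (prefixLaw cnt hmn.le x / ∏ t, p (x t)) := by
    unfold D Pm T prefixLaw typeClass
    congr!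
  rw [hD]
  exact ⟨hchain, hchain.trans (by simpa using hlog)⟩
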